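/- arXiv:2204.05420 — 4 statements merged into one kernel-verified Lean document; each statement's English description precedes it below -/
import Mathlib

section
/- Let n ≥ 3 and let λ₁ ≥ λ₂ ≥ ... ≥ λₙ be real numbers with ∑_{i=1}^n arctan(λᵢ) ≥ (n-2)π/2. Then λ_{n-1} ≥ |λₙ|. -/
theorem second_smallest_ge_abs_smallest (n : ℕ) (hn : 3 ≤ n) (lam : Fin n → ℝ)
    (hsort : ∀ i j : Fin n, i ≤ j → lam j ≤ lam i)
    (hsum : ∑ i, Real.arctan (lam i) ≥ ((n : ℝ) - 2) * Real.pi / 2) :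
    lam ⟨n - 2, by omega⟩ ≥ |lam ⟨n - 1, by omega⟩| := by
  set i1 : Fin n := ⟨n - 2, by omega⟩
  set i2 : Fin n := ⟨n - 1, by omega⟩
  have hne : i1 ≠ i2 := by
    simp only [i1, i2, ne_eq, Fin.mk.injEq]
    omega
  have hle : lam i2 ≤ lam i1 := hsort i1 i2 (by simp [i1, i2, Fin.le_def]; omega)
  -- split the sum
  have hsubset : ({i1, i2} : Finset (Fin n)) ⊆ Finset.univ := Finset.subset_univ _
  have hsplit : ∑ i, Real.arctan (lam i)
      = (Real.arctan (lam i1) + Real.arctan (lam i2))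
        + ∑ i ∈ Finset.univ \ {i1, i2}, Real.arctan (lam i) := by
    rw [← Finset.sum_sdiff hsubset, Finset.sum_pair hne]; ring
  have hcard : (Finset.univ \ ({i1, i2} : Finset (Fin n))).card = n - 2 := by
    rw [Finset.card_sdiff_of_subset hsubset, Finset.card_pair hne]
    simp
  have hnonempty : (Finset.univ \ ({i1, i2} : Finset (Fin n))).Nonempty := by
    rw [← Finset.card_pos, hcard]; omega
  have hbound : ∑ i ∈ Finset.univ \ ({i1, i2} : Finset (Fin n)), Real.arctan (lam i)
      < ((n : ℝ) - 2) * Real.pi / 2 := by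
    calc ∑ i ∈ Finset.univ \ ({i1, i2} : Finset (Fin n)), Real.arctan (lam i)
        < ∑ i ∈ Finset.univ \ ({i1, i2} : Finset (Fin n)), Real.pi / 2 :=
          Finset.sum_lt_sum_of_nonempty hnonempty
            (fun i _ => Real.arctan_lt_pi_div_two _)
      _ = ((n : ℝ) - 2) * Real.pi / 2 := by
          rw [Finset.sum_const, hcard, nsmul_eq_mul]
          have : ((n - 2 : ℕ) : ℝ) = (n : ℝ) - 2 := by
            push_cast [Nat.cast_sub (by omega : 2 ≤ n)]; ring
          rw [this]; ring
  have hpos : 0 < Real.arctan (lam i1) + Real.arctan (lam i2) := by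
    have := hsum
    rw [hsplit] at this
    linarith
  have h2 : -lam i2 ≤ lam i1 := by
    by_contra h
    push_neg at h
    have : Real.arctan (lam i1) < Real.arctan (-lam i2) := Real.arctan_strictMono h
    rw [Real.arctan_neg] at this
    linarith
  rw [ge_iff_le, abs_le]
  exact ⟨by linarith, hle⟩
end

section
/- Let n ≥ 3 and let λ₁ ≥ λ₂ ≥ ... ≥ λₙ be real numbers with ∑_{i=1}^n arctan(λᵢ) ≥ (n-2)π/2. Then for any two distinct indices i ≠ j, λᵢ + λⱼ ≥ 0. -/
theorem pairwise_sum_nonneg (n : ℕ) (hn : 3 ≤ n) (lam : Fin n → ℝ)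
    (hsort : ∀ i j : Fin n, i ≤ j → lam j ≤ lam i)
    (hsum : ∑ i, Real.arctan (lam i) ≥ ((n : ℝ) - 2) * Real.pi / 2) :
    ∀ i j : Fin n, i ≠ j → lam i + lam j ≥ 0 := by
  intro i j hij
  by_contra h
  push_neg at h
  -- arctan (lam i) + arctan (lam j) < 0
  have key : Real.arctan (lam i) + Real.arctan (lam j) < 0 := by
    have h1 : Real.arctan (lam i) < Real.arctan (-(lam j)) :=
      Real.arctan_strictMono (by linarith)
    rw [Real.arctan_neg] at h1
    linarith
  -- split the sum
  have hij' : ({i, j} : Finset (Fin n)) ⊆ Finset.univ := Finset.subset_univ _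
  have hsplit : ∑ k ∈ Finset.univ \ {i, j}, Real.arctan (lam k)
      + ∑ k ∈ ({i, j} : Finset (Fin n)), Real.arctan (lam k)
      = ∑ k, Real.arctan (lam k) := Finset.sum_sdiff hij'
  have hpair : ∑ k ∈ ({i, j} : Finset (Fin n)), Real.arctan (lam k)
      = Real.arctan (lam i) + Real.arctan (lam j) := Finset.sum_pair hij
  have hcard : (Finset.univ \ ({i, j} : Finset (Fin n))).card = n - 2 := by
    rw [Finset.card_sdiff_of_subset hij', Finset.card_univ, Finset.card_pair hij, Fintype.card_fin]
  have hne : (Finset.univ \ ({i, j} : Finset (Fin n))).Nonempty := by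
    rw [← Finset.card_pos, hcard]; omega
  have hbound : ∑ k ∈ Finset.univ \ {i, j}, Real.arctan (lam k)
      < ∑ _k ∈ Finset.univ \ ({i, j} : Finset (Fin n)), (Real.pi / 2) :=
    Finset.sum_lt_sum_of_nonempty hne (fun k _ => Real.arctan_lt_pi_div_two _)
  rw [Finset.sum_const, hcard, nsmul_eq_mul] at hbound
  have hcast : ((n - 2 : ℕ) : ℝ) = (n : ℝ) - 2 := by
    have : (2 : ℕ) ≤ n := by omega
    push_cast [Nat.cast_sub this]
    ring
  rw [hcast] at hbound
  have := hsum
  rw [← hsplit, hpair] at this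
  nlinarith [Real.pi_pos]
end

section
/- Let n ≥ 3, let 1 ≤ k ≤ n-1, and let λ₁ ≥ λ₂ ≥ ... ≥ λₙ be real numbers with ∑_{i=1}^n arctan(λᵢ) ≥ (n-2)π/2. Then the k-th elementary symmetric polynomial σ_k(λ₁,...,λₙ) is nonnegative. -/
open Real Finset

lemma arctan_add_le {a b : ℝ} (ha : 0 ≤ a) (hb : 0 ≤ b) :
    Real.arctan (a + b) ≤ Real.arctan a + Real.arctan b := by
  rcases lt_or_ge (a * b) 1 with h | h
  · rw [Real.arctan_add h]
    apply Real.arctan_strictMono.monotone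
    have h1 : 0 < 1 - a * b := by linarith
    rw [le_div_iff₀ h1]
    nlinarith [mul_nonneg (mul_nonneg ha hb) (add_nonneg ha hb)]
  · have ha' : 0 < a := by nlinarith
    have hb' : 0 < b := by nlinarith
    have h2 : a⁻¹ ≤ b := by
      rw [inv_le_iff_one_le_mul₀ ha'] at *
      · nlinarith
    have := Real.arctan_strictMono.monotone h2
    have h3 := Real.arctan_inv_of_pos ha'
    have h4 := Real.arctan_lt_pi_div_two (a + b)
    linarith

lemma arctan_sum_le {ι : Type*} (s : Finset ι) (f : ι → ℝ) (hf : ∀ i ∈ s, 0 ≤ f i) :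
    Real.arctan (∑ i ∈ s, f i) ≤ ∑ i ∈ s, Real.arctan (f i) := by
  induction s using Finset.cons_induction with
  | empty => simp
  | cons a s ha ih =>
    rw [Finset.sum_cons, Finset.sum_cons]
    have h1 : 0 ≤ f a := hf a (Finset.mem_cons_self a s)
    have h2 : ∀ i ∈ s, 0 ≤ f i := fun i hi => hf i (Finset.mem_cons.2 (Or.inr hi))
    calc Real.arctan (f a + ∑ i ∈ s, f i)
        ≤ Real.arctan (f a) + Real.arctan (∑ i ∈ s, f i) :=
          arctan_add_le h1 (Finset.sum_nonneg h2)
      _ ≤ _ := by linarith [ih h2]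

lemma exchange {ι : Type*} [DecidableEq ι] (U : Finset ι) (k : ℕ) (f : ι → ℝ) :
    ∑ T ∈ U.powersetCard (k + 1), ∑ j ∈ T, ∏ i ∈ T.erase j, f i
    = ((U.card - k : ℕ) : ℝ) * ∑ S ∈ U.powersetCard k, ∏ i ∈ S, f i := by
  have RHS : ((U.card - k : ℕ) : ℝ) * ∑ S ∈ U.powersetCard k, ∏ i ∈ S, f i
      = ∑ S ∈ U.powersetCard k, ∑ _j ∈ U \ S, ∏ i ∈ S, f i := by
    rw [Finset.mul_sum]
    refine Finset.sum_congr rfl fun S hS => ?_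
    rw [Finset.mem_powersetCard] at hS
    rw [Finset.sum_const, nsmul_eq_mul, Finset.card_sdiff_of_subset hS.1, hS.2]
  rw [RHS, Finset.sum_sigma', Finset.sum_sigma']
  refine Finset.sum_bij' (fun p _ => (⟨p.1.erase p.2, p.2⟩ : Σ _ : Finset ι, ι))
    (fun p _ => (⟨insert p.2 p.1, p.2⟩ : Σ _ : Finset ι, ι)) ?_ ?_ ?_ ?_ ?_
  · rintro ⟨T, j⟩ hp
    simp only [Finset.mem_sigma, Finset.mem_powersetCard] at hp ⊢
    obtain ⟨⟨hTU, hTc⟩, hj⟩ := hp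
    refine ⟨⟨(Finset.erase_subset _ _).trans hTU, ?_⟩, ?_⟩
    · rw [Finset.card_erase_of_mem hj, hTc]; omega
    · rw [Finset.mem_sdiff]
      exact ⟨hTU hj, Finset.notMem_erase _ _⟩
  · rintro ⟨S, j⟩ hp
    simp only [Finset.mem_sigma, Finset.mem_powersetCard, Finset.mem_sdiff] at hp ⊢
    obtain ⟨⟨hSU, hSc⟩, hjU, hjS⟩ := hp
    refine ⟨⟨Finset.insert_subset hjU hSU, ?_⟩, Finset.mem_insert_self _ _⟩
    rw [Finset.card_insert_of_notMem hjS, hSc]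
  · rintro ⟨T, j⟩ hp
    simp only [Finset.mem_sigma, Finset.mem_powersetCard] at hp
    simp [Finset.insert_erase hp.2]
  · rintro ⟨S, j⟩ hp
    simp only [Finset.mem_sigma, Finset.mem_powersetCard, Finset.mem_sdiff] at hp
    simp [Finset.erase_insert hp.2.2]
  · rintro ⟨T, j⟩ _
    rfl

/-- The k-th elementary symmetric polynomial of λ₁,...,λₙ. -/
def esymm (n k : ℕ) (lam : Fin n → ℝ) : ℝ :=
  ∑ s ∈ Finset.powersetCard k (Finset.univ : Finset (Fin n)), ∏ i ∈ s, lam i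

theorem esymm_nonneg (n k : ℕ) (hn : 3 ≤ n) (hk1 : 1 ≤ k) (hk2 : k ≤ n - 1)
    (lam : Fin n → ℝ)
    (hsort : ∀ i j : Fin n, i ≤ j → lam j ≤ lam i)
    (hsum : ∑ i, Real.arctan (lam i) ≥ ((n : ℝ) - 2) * Real.pi / 2) :
    0 ≤ esymm n k lam := by
  have hn0 : 0 < n := by omega
  set lst : Fin n := ⟨n - 1, by omega⟩ with hlst
  by_cases hneg : 0 ≤ lam lst
  · -- all entries nonnegative
    have hpos : ∀ i : Fin n, 0 ≤ lam i := by
      intro i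
      refine le_trans hneg (hsort i lst ?_)
      rw [Fin.le_def]
      have := i.isLt
      simp only [hlst]
      omega
    exact Finset.sum_nonneg fun s _ => Finset.prod_nonneg fun i _ => hpos i
  · push_neg at hneg
    set t : ℝ := -lam lst with ht
    have ht0 : 0 < t := by simp only [ht]; linarith
    have hlamlst : lam lst = -t := by rw [ht]; ring
    set U : Finset (Fin n) := Finset.univ.erase lst with hU
    have hUcard : U.card = n - 1 := by
      rw [hU, Finset.card_erase_of_mem (Finset.mem_univ _), Finset.card_univ, Fintype.card_fin]
    set p : Fin n := ⟨n - 2, by omega⟩ with hp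
    have hplst : p ≠ lst := by
      simp only [hp, hlst, Ne, Fin.ext_iff]
      omega
    have hpU : p ∈ U := Finset.mem_erase.2 ⟨hplst, Finset.mem_univ _⟩
    have h1 : ∑ i ∈ U.erase p, Real.arctan (lam i) + Real.arctan (lam p)
        = ∑ i ∈ U, Real.arctan (lam i) := Finset.sum_erase_add _ _ hpU
    have h2 : ∑ i ∈ U, Real.arctan (lam i) + Real.arctan (lam lst)
        = ∑ i, Real.arctan (lam i) := Finset.sum_erase_add _ _ (Finset.mem_univ _)
    have hVcard : (U.erase p).card = n - 2 := by
      rw [Finset.card_erase_of_mem hpU, hUcard]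
      omega
    have hVne : (U.erase p).Nonempty := by
      rw [← Finset.card_pos, hVcard]; omega
    have hbound : ∑ i ∈ U.erase p, Real.arctan (lam i) < ((n : ℝ) - 2) * Real.pi / 2 := by
      have hlt := Finset.sum_lt_sum_of_nonempty hVne
        (f := fun i => Real.arctan (lam i)) (g := fun _ => Real.pi / 2)
        (fun i _ => Real.arctan_lt_pi_div_two _)
      rw [Finset.sum_const, hVcard, nsmul_eq_mul] at hlt
      have hc : ((n - 2 : ℕ) : ℝ) = (n : ℝ) - 2 := by
        have h2n : 2 ≤ n := by omega
        push_cast [Nat.cast_sub h2n]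
        ring
      rw [hc] at hlt
      linarith
    -- lam p > t
    have harclst : Real.arctan (lam lst) = -Real.arctan t := by
      rw [hlamlst, Real.arctan_neg]
    have hppos : t < lam p := by
      have : Real.arctan t < Real.arctan (lam p) := by linarith
      exact Real.arctan_strictMono.lt_iff_lt.mp this
    have hUpos : ∀ i ∈ U, t < lam i := by
      intro i hi
      have hine : i ≠ lst := (Finset.mem_erase.1 hi).1
      have hip : i ≤ p := by
        rw [Fin.le_def]
        have h3 := i.isLt
        have h4 : i.val ≠ n - 1 := fun h => hine (Fin.ext (by simp [hlst, h]))
        simp only [hp]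
        omega
      exact lt_of_lt_of_le hppos (hsort i p hip)
    have hU0 : ∀ i ∈ U, 0 < lam i := fun i hi => lt_trans ht0 (hUpos i hi)
    -- key: t * sum of inverses ≤ 1
    have hsumU : ∑ i ∈ U, Real.arctan (lam i) ≥ ((n : ℝ) - 2) * Real.pi / 2 + Real.arctan t := by
      have := hsum
      linarith [h2, harclst]
    have hinv : ∑ i ∈ U, Real.arctan ((lam i)⁻¹) ≤ Real.arctan t⁻¹ := by
      have e1 : ∑ i ∈ U, Real.arctan ((lam i)⁻¹)
          = ∑ i ∈ U, (Real.pi / 2 - Real.arctan (lam i)) :=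
        Finset.sum_congr rfl fun i hi => Real.arctan_inv_of_pos (hU0 i hi)
      rw [e1, Finset.sum_sub_distrib, Finset.sum_const, hUcard, nsmul_eq_mul,
        Real.arctan_inv_of_pos ht0]
      have hc : ((n - 1 : ℕ) : ℝ) = (n : ℝ) - 1 := by
        have h1n : 1 ≤ n := by omega
        push_cast [Nat.cast_sub h1n]
        ring
      rw [hc]
      linarith
    have hsle : ∑ i ∈ U, (lam i)⁻¹ ≤ t⁻¹ := by
      have hs := arctan_sum_le U (fun i => (lam i)⁻¹)
        (fun i hi => inv_nonneg.2 (hU0 i hi).le)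
      exact Real.arctan_strictMono.le_iff_le.mp (hs.trans hinv)
    have hkey : t * ∑ i ∈ U, (lam i)⁻¹ ≤ 1 := by
      calc t * ∑ i ∈ U, (lam i)⁻¹ ≤ t * t⁻¹ := by
            exact mul_le_mul_of_nonneg_left hsle ht0.le
        _ = 1 := mul_inv_cancel₀ ht0.ne'
    -- decomposition
    set A : ℝ := ∑ T ∈ U.powersetCard k, ∏ i ∈ T, lam i with hA
    set B : ℝ := ∑ S ∈ U.powersetCard (k - 1), ∏ i ∈ S, lam i with hB
    have hlstU : lst ∉ U := Finset.notMem_erase _ _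
    have hdecomp : esymm n k lam = A + lam lst * B := by
      unfold esymm
      have huniv : (Finset.univ : Finset (Fin n)) = insert lst U :=
        (Finset.insert_erase (Finset.mem_univ lst)).symm
      obtain ⟨k', hkk⟩ : ∃ k', k = k' + 1 := ⟨k - 1, by omega⟩
      subst hkk
      rw [huniv, Finset.powersetCard_succ_insert hlstU]
      have hdisj : Disjoint (U.powersetCard (k' + 1))
          ((U.powersetCard k').image (insert lst)) := by
        rw [Finset.disjoint_left]
        intro T hT hT'
        obtain ⟨S, hS, rfl⟩ := Finset.mem_image.1 hT'
        have : lst ∈ U := (Finset.mem_powersetCard.1 hT).1 (Finset.mem_insert_self _ _)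
        exact hlstU this
      rw [Finset.sum_union hdisj, Finset.sum_image ?hinj]
      case hinj =>
        intro x hx y hy hxy
        have hxl : lst ∉ x := fun h => hlstU ((Finset.mem_powersetCard.1 hx).1 h)
        have hyl : lst ∉ y := fun h => hlstU ((Finset.mem_powersetCard.1 hy).1 h)
        rw [← Finset.erase_insert hxl, hxy, Finset.erase_insert hyl]
      congr 1
      have : ∀ S ∈ U.powersetCard k', ∏ i ∈ insert lst S, lam i
          = lam lst * ∏ i ∈ S, lam i := by
        intro S hS
        exact Finset.prod_insert fun h => hlstU ((Finset.mem_powersetCard.1 hS).1 h)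
      rw [Finset.sum_congr rfl this, ← Finset.mul_sum, hB]
      simp only [Nat.add_sub_cancel]
    have hApos : ∀ T ∈ U.powersetCard k, (0:ℝ) ≤ ∏ i ∈ T, lam i := fun T hT =>
      Finset.prod_nonneg fun i hi => (hU0 i ((Finset.mem_powersetCard.1 hT).1 hi)).le
    have hBpos : 0 ≤ B :=
      Finset.sum_nonneg fun S hS =>
        Finset.prod_nonneg fun i hi => (hU0 i ((Finset.mem_powersetCard.1 hS).1 hi)).le
    -- the exchange identity
    have hex := exchange U (k - 1) lam
    rw [show k - 1 + 1 = k by omega] at hex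
    have hcoef : ((U.card - (k - 1) : ℕ) : ℝ) = ((n - k : ℕ) : ℝ) := by
      rw [hUcard]
      congr 1
      omega
    rw [hcoef] at hex
    have hterm : ∀ T ∈ U.powersetCard k,
        ∑ j ∈ T, ∏ i ∈ T.erase j, lam i = (∏ i ∈ T, lam i) * ∑ j ∈ T, (lam j)⁻¹ := by
      intro T hT
      rw [Finset.mul_sum]
      refine Finset.sum_congr rfl fun j hj => ?_
      have hjne : lam j ≠ 0 := (hU0 j ((Finset.mem_powersetCard.1 hT).1 hj)).ne'
      rw [← Finset.mul_prod_erase T lam hj]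
      field_simp
    have hle : ((n - k : ℕ) : ℝ) * (t * B) ≤ A := by
      have hsum2 : ∑ T ∈ U.powersetCard k, (∏ i ∈ T, lam i) * (t * ∑ j ∈ T, (lam j)⁻¹)
          ≤ ∑ T ∈ U.powersetCard k, ∏ i ∈ T, lam i := by
        refine Finset.sum_le_sum fun T hT => ?_
        have hsub : T ⊆ U := (Finset.mem_powersetCard.1 hT).1
        have h5 : ∑ j ∈ T, (lam j)⁻¹ ≤ ∑ i ∈ U, (lam i)⁻¹ :=
          Finset.sum_le_sum_of_subset_of_nonneg hsub
            (fun i hi _ => inv_nonneg.2 (hU0 i hi).le)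
        have h6 : t * ∑ j ∈ T, (lam j)⁻¹ ≤ 1 :=
          le_trans (mul_le_mul_of_nonneg_left h5 ht0.le) hkey
        calc (∏ i ∈ T, lam i) * (t * ∑ j ∈ T, (lam j)⁻¹)
            ≤ (∏ i ∈ T, lam i) * 1 := mul_le_mul_of_nonneg_left h6 (hApos T hT)
          _ = ∏ i ∈ T, lam i := mul_one _
      calc ((n - k : ℕ) : ℝ) * (t * B) = t * (((n - k : ℕ) : ℝ) * B) := by ring
        _ = t * ∑ T ∈ U.powersetCard k, (∏ i ∈ T, lam i) * ∑ j ∈ T, (lam j)⁻¹ := by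
            rw [← hex, Finset.sum_congr rfl hterm]
        _ = ∑ T ∈ U.powersetCard k, (∏ i ∈ T, lam i) * (t * ∑ j ∈ T, (lam j)⁻¹) := by
            rw [Finset.mul_sum]
            exact Finset.sum_congr rfl fun T _ => by ring
        _ ≤ A := hsum2
    have hnk1 : (1 : ℝ) ≤ ((n - k : ℕ) : ℝ) := by
      have : 1 ≤ n - k := by omega
      exact_mod_cast this
    have htB : 0 ≤ t * B := mul_nonneg ht0.le hBpos
    have hfinal : t * B ≤ A := le_trans (le_mul_of_one_le_left htB hnk1) hle
    rw [hdecomp, hlamlst]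
    linarith
end

section
/- Let n ≥ 3 and let λ₁ ≥ ... ≥ λₙ be real numbers with ∑_{i=1}^n arctan(λᵢ) ≥ (n-2)π/2 and λₙ < 0, and suppose λ₁ = ... = λ_m > λ_{m+1} for some 1 ≤ m ≤ n-1. Then for every 0 < ε < 1/2 satisfying m²/(2m-1-2ε) ≤ n/2, one has (2λₙ/(λ₁-λₙ)) · ( (λ₁/2)(σ_{n-1}/σₙ) + m²/(2m-1-2ε) - n/2 ) ≥ (|λₙ|/(λ₁-λₙ)) · 2(n/2 - m²/(2m-1-2ε)) ≥ 0. -/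
open Real Finset

set_option maxHeartbeats 1000000 in
theorem bracket_lower_bound (n m : ℕ) (hn : 3 ≤ n) (hm1 : 1 ≤ m) (hm2 : m ≤ n - 1)
    (lam : Fin n → ℝ)
    (hsort : ∀ i j : Fin n, i ≤ j → lam j ≤ lam i)
    (hsum : ∑ i, Real.arctan (lam i) ≥ ((n : ℝ) - 2) * Real.pi / 2)
    (hneg : lam ⟨n - 1, by omega⟩ < 0)
    (hmult : ∀ i : Fin n, (i : ℕ) < m → lam i = lam ⟨0, by omega⟩)
    (hstrict : lam ⟨m, by omega⟩ < lam ⟨0, by omega⟩)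
    (ε : ℝ) (hε1 : 0 < ε) (hε2 : ε < 1 / 2)
    (hεm : (m : ℝ) ^ 2 / (2 * (m : ℝ) - 1 - 2 * ε) ≤ (n : ℝ) / 2) :
    (2 * lam ⟨n - 1, by omega⟩ / (lam ⟨0, by omega⟩ - lam ⟨n - 1, by omega⟩)) *
        ((lam ⟨0, by omega⟩ / 2) * (esymm n (n - 1) lam / esymm n n lam)
          + (m : ℝ) ^ 2 / (2 * (m : ℝ) - 1 - 2 * ε) - (n : ℝ) / 2)
      ≥ (|lam ⟨n - 1, by omega⟩| / (lam ⟨0, by omega⟩ - lam ⟨n - 1, by omega⟩)) *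
          (2 * ((n : ℝ) / 2 - (m : ℝ) ^ 2 / (2 * (m : ℝ) - 1 - 2 * ε)))
    ∧ (|lam ⟨n - 1, by omega⟩| / (lam ⟨0, by omega⟩ - lam ⟨n - 1, by omega⟩)) *
          (2 * ((n : ℝ) / 2 - (m : ℝ) ^ 2 / (2 * (m : ℝ) - 1 - 2 * ε))) ≥ 0 := by
  set p : Fin n := ⟨n - 1, by omega⟩ with hp
  set z : Fin n := ⟨0, by omega⟩ with hz
  have hq : (⟨n - 2, by omega⟩ : Fin n) ≠ p := by
    simp only [hp, Ne, Fin.mk.injEq]; omega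
  -- Step 1: all entries except the last are positive
  have hqpos : 0 < lam ⟨n - 2, by omega⟩ := by
    by_contra hq0
    push_neg at hq0
    set q : Fin n := ⟨n - 2, by omega⟩ with hqdef
    have hsub : ({q, p} : Finset (Fin n)) ⊆ univ := Finset.subset_univ _
    have hcardpair : ({q, p} : Finset (Fin n)).card = 2 := by
      rw [Finset.card_insert_of_notMem (by simpa using hq), Finset.card_singleton]
    have hcard : ((univ : Finset (Fin n)) \ {q, p}).card = n - 2 := by
      rw [Finset.card_sdiff_of_subset hsub, Finset.card_univ, Fintype.card_fin, hcardpair]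
    have hsplit := Finset.sum_sdiff (f := fun i => Real.arctan (lam i)) hsub
    rw [Finset.sum_pair hq] at hsplit
    have hne : ((univ : Finset (Fin n)) \ {q, p}).Nonempty := by
      rw [← Finset.card_pos, hcard]; omega
    have hlt : ∑ i ∈ (univ : Finset (Fin n)) \ {q, p}, Real.arctan (lam i)
        < ((n : ℝ) - 2) * (Real.pi / 2) := by
      have := Finset.sum_lt_sum_of_nonempty hne
        (f := fun i => Real.arctan (lam i)) (g := fun _ => Real.pi / 2)
        (fun i _ => Real.arctan_lt_pi_div_two (lam i))
      rw [Finset.sum_const, hcard, nsmul_eq_mul] at this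
      have hcast : ((n - 2 : ℕ) : ℝ) = (n : ℝ) - 2 := by
        push_cast [Nat.cast_sub (by omega : 2 ≤ n)]; ring
      rw [hcast] at this
      exact this
    have harcq : Real.arctan (lam q) ≤ 0 := by
      have := Real.arctan_strictMono.monotone hq0
      rwa [Real.arctan_zero] at this
    have harcp : Real.arctan (lam p) < 0 := by
      have := Real.arctan_strictMono hneg
      rwa [Real.arctan_zero] at this
    have : ∑ i, Real.arctan (lam i) < ((n : ℝ) - 2) * Real.pi / 2 := by
      rw [← hsplit]; ring_nf; ring_nf at hlt; linarith
    linarith [hsum]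
  have hpos : ∀ i : Fin n, i ≠ p → 0 < lam i := by
    intro i hi
    have hival : (i : ℕ) ≤ n - 2 := by
      have h1 : (i : ℕ) < n := i.isLt
      have h2 : (i : ℕ) ≠ n - 1 := fun h => hi (by simp [hp, Fin.ext_iff, h])
      omega
    have : lam ⟨n - 2, by omega⟩ ≤ lam i := hsort i ⟨n - 2, by omega⟩ (by simp [Fin.le_def]; omega)
    linarith
  have hne0 : ∀ i : Fin n, lam i ≠ 0 := by
    intro i
    rcases eq_or_ne i p with rfl | h
    · exact hneg.ne
    · exact (hpos i h).ne'
  -- Step 2: key reciprocal sum bound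
  have hkey : ∑ i ∈ Finset.univ.erase p, (lam i)⁻¹ ≤ (-lam p)⁻¹ := by
    have h1 : ∀ i ∈ Finset.univ.erase p, Real.arctan (lam i)⁻¹
        = Real.pi / 2 - Real.arctan (lam i) := fun i hi =>
      Real.arctan_inv_of_pos (hpos i (Finset.ne_of_mem_erase hi))
    have hcard : (Finset.univ.erase p).card = n - 1 := by
      rw [Finset.card_erase_of_mem (Finset.mem_univ p), Finset.card_univ, Fintype.card_fin]
    have h2 : ∑ i ∈ Finset.univ.erase p, Real.arctan (lam i)⁻¹
        = ((n : ℝ) - 1) * (Real.pi / 2) - ∑ i ∈ Finset.univ.erase p, Real.arctan (lam i) := by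
      rw [Finset.sum_congr rfl h1, Finset.sum_sub_distrib, Finset.sum_const, hcard,
        nsmul_eq_mul, Nat.cast_sub (by omega : 1 ≤ n)]
      push_cast; ring
    have h3 : ∑ i ∈ Finset.univ.erase p, Real.arctan (lam i)
        = (∑ i, Real.arctan (lam i)) - Real.arctan (lam p) :=
      Finset.sum_erase_eq_sub (Finset.mem_univ p)
    have h4 : Real.arctan ((-lam p)⁻¹) = Real.pi / 2 + Real.arctan (lam p) := by
      rw [Real.arctan_inv_of_pos (by linarith : 0 < -lam p), Real.arctan_neg]; ring
    have h5 : ∑ i ∈ Finset.univ.erase p, Real.arctan (lam i)⁻¹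
        ≤ Real.arctan ((-lam p)⁻¹) := by
      rw [h2, h3, h4]; linarith [hsum]
    have h6 : Real.arctan (∑ i ∈ Finset.univ.erase p, (lam i)⁻¹)
        ≤ Real.arctan ((-lam p)⁻¹) := by
      refine le_trans (arctan_sum_le _ _ fun i hi => ?_) h5
      exact (inv_pos.mpr (hpos i (Finset.ne_of_mem_erase hi))).le
    exact Real.arctan_strictMono.le_iff_le.mp h6
  have hS : (∑ i, (lam i)⁻¹) ≤ 0 := by
    have h3 : ∑ i ∈ Finset.univ.erase p, (lam i)⁻¹
        = (∑ i, (lam i)⁻¹) - (lam p)⁻¹ :=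
      Finset.sum_erase_eq_sub (Finset.mem_univ p)
    have h4 : (-lam p)⁻¹ = -(lam p)⁻¹ := by rw [inv_neg]
    rw [h3, h4] at hkey
    linarith
  -- Step 3: products
  have hPe : 0 < ∏ i ∈ Finset.univ.erase p, lam i :=
    Finset.prod_pos fun i hi => hpos i (Finset.ne_of_mem_erase hi)
  have hprod := Finset.mul_prod_erase Finset.univ lam (Finset.mem_univ p)
  have hPneg : ∏ i, lam i < 0 := by
    rw [← hprod]
    exact mul_neg_of_neg_of_pos hneg hPe
  have hen : esymm n n lam = ∏ i, lam i := by
    have h : Finset.powersetCard n (Finset.univ : Finset (Fin n)) = {Finset.univ} := by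
      have := Finset.powersetCard_self (Finset.univ : Finset (Fin n))
      simpa using this
    rw [esymm, h, Finset.sum_singleton]
  have hen1 : esymm n (n - 1) lam = (∑ j, (lam j)⁻¹) * ∏ i, lam i := by
    rw [esymm]
    have hbij : ∑ s ∈ Finset.powersetCard (n - 1) (Finset.univ : Finset (Fin n)), ∏ i ∈ s, lam i
        = ∑ s ∈ Finset.powersetCard 1 (Finset.univ : Finset (Fin n)), ∏ i ∈ sᶜ, lam i := by
      refine Finset.sum_nbij' (i := fun s => sᶜ) (j := fun s => sᶜ) ?_ ?_ ?_ ?_ ?_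
      · intro s hs
        rw [Finset.mem_powersetCard_univ] at hs ⊢
        rw [Finset.card_compl, hs, Fintype.card_fin]
        omega
      · intro s hs
        rw [Finset.mem_powersetCard_univ] at hs ⊢
        rw [Finset.card_compl, hs, Fintype.card_fin]
      · intro s _; exact compl_compl s
      · intro s _; exact compl_compl s
      · intro s _; rw [compl_compl]
    rw [hbij, Finset.powersetCard_one, Finset.sum_map]
    have hterm : ∀ j : Fin n, ∏ i ∈ (({j} : Finset (Fin n)))ᶜ, lam i
        = (lam j)⁻¹ * ∏ i, lam i := by
      intro j
      have := Finset.mul_prod_erase Finset.univ lam (Finset.mem_univ j)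
      rw [Finset.compl_singleton, ← this, inv_mul_cancel_left₀ (hne0 j)]
    simp only [Function.Embedding.coeFn_mk, hterm]
    rw [← Finset.sum_mul]
  -- Final algebra
  have haz : 0 < lam z := hpos z (by simp [hz, hp, Fin.ext_iff]; omega)
  have hd : 0 < lam z - lam p := by linarith
  have hratio : esymm n (n - 1) lam / esymm n n lam = ∑ j, (lam j)⁻¹ := by
    rw [hen1, hen, mul_div_assoc, div_self hPneg.ne, mul_one]
  rw [abs_of_neg hneg, hratio]
  have hts : 0 ≤ lam z * (lam p * ∑ j, (lam j)⁻¹) := by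
    have h0 : 0 ≤ (-lam p) * (-(∑ j, (lam j)⁻¹)) := mul_nonneg (by linarith) (by linarith)
    nlinarith
  set Cv : ℝ := (m : ℝ) ^ 2 / (2 * (m : ℝ) - 1 - 2 * ε) with hCv
  constructor
  · have key : (2 * lam p / (lam z - lam p)) *
          ((lam z / 2) * (∑ j, (lam j)⁻¹) + Cv - (n : ℝ) / 2)
        - (-lam p / (lam z - lam p)) *
          (2 * ((n : ℝ) / 2 - Cv))
        = (lam z * (lam p * ∑ j, (lam j)⁻¹)) / (lam z - lam p) := by
      field_simp
      ring
    rw [ge_iff_le, ← sub_nonneg, key]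
    exact div_nonneg hts hd.le
  · apply mul_nonneg (div_nonneg (by linarith : (0:ℝ) ≤ -lam p) hd.le)
    linarith
end
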